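/- Let (A, C, B) be a recollement of abelian categories. Then the following are equivalent: (a) i^* is an exact functor; (b) i^! j_! = 0; (c) i^! j_! j^* = 0. -/

import Mathlib

/-!
Condition (b) says exactly that `Hom(M, j_! B) = 0` whenever `j^* M = 0`, since such an `M` is
some `i_* A` and `i_* ⊣ i^!`. If `i^*` is left exact, the image of a map `M ⟶ j_! B` is killed by
`j^*` (it is a quotient of `M`) and by `i^*` (it is a subobject of `j_! B`, and `i^* j_! = 0`),
so it vanishes. Conversely, under this vanishing the canonical sequences
`0 ⟶ j_! j^* X ⟶ X ⟶ i_* i^* X ⟶ 0` are short exact, and for a monomorphism `f` the snake lemma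
embeds `ker (i_* i^* f)`, an object killed by `j^*`, into `coker (j_! j^* f) ≅ j_! (coker j^* f)`;
hence `i^* f` is a monomorphism. Finally (b) ⟺ (c) because `j^* j_! ≅ 𝟭`.
-/

open CategoryTheory CategoryTheory.Limits

universe v₁ v₂ v₃ u₁ u₂ u₃

/-- A recollement of abelian categories `(𝒜, 𝒞, ℬ)`, consisting of additive functors
`i_* : 𝒜 ⥤ 𝒞`, `i^*, i^! : 𝒞 ⥤ 𝒜`, `j^* : 𝒞 ⥤ ℬ`, `j_!, j_* : ℬ ⥤ 𝒞` with adjoint pairs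
`(i^*, i_*)`, `(i_*, i^!)`, `(j_!, j^*)`, `(j^*, j_*)`, with `i_*`, `j_!`, `j_*` fully faithful
and the essential image of `i_*` equal to the kernel of `j^*`. -/
structure Recollement (𝒜 : Type u₁) (𝒞 : Type u₂) (ℬ : Type u₃)
    [Category.{v₁} 𝒜] [Category.{v₂} 𝒞] [Category.{v₃} ℬ]
    [Abelian 𝒜] [Abelian 𝒞] [Abelian ℬ] where
  /-- the functor `i^* : 𝒞 ⥤ 𝒜` -/
  iStar : 𝒞 ⥤ 𝒜
  /-- the functor `i_* : 𝒜 ⥤ 𝒞` -/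
  iIns : 𝒜 ⥤ 𝒞
  /-- the functor `i^! : 𝒞 ⥤ 𝒜` -/
  iShriek : 𝒞 ⥤ 𝒜
  /-- the functor `j_! : ℬ ⥤ 𝒞` -/
  jShriek : ℬ ⥤ 𝒞
  /-- the functor `j^* : 𝒞 ⥤ ℬ` -/
  jStar : 𝒞 ⥤ ℬ
  /-- the functor `j_* : ℬ ⥤ 𝒞` -/
  jIns : ℬ ⥤ 𝒞
  iStar_additive : iStar.Additive
  iIns_additive : iIns.Additive
  iShriek_additive : iShriek.Additive
  jShriek_additive : jShriek.Additive
  jStar_additive : jStar.Additive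
  jIns_additive : jIns.Additive
  /-- the adjunction `i^* ⊣ i_*` -/
  adj₁ : iStar ⊣ iIns
  /-- the adjunction `i_* ⊣ i^!` -/
  adj₂ : iIns ⊣ iShriek
  /-- the adjunction `j_! ⊣ j^*` -/
  adj₃ : jShriek ⊣ jStar
  /-- the adjunction `j^* ⊣ j_*` -/
  adj₄ : jStar ⊣ jIns
  iIns_full : iIns.Full
  iIns_faithful : iIns.Faithful
  jShriek_full : jShriek.Full
  jShriek_faithful : jShriek.Faithful
  jIns_full : jIns.Full
  jIns_faithful : jIns.Faithful
  /-- `im i_* = ker j^*` -/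
  im_eq_ker : ∀ X : 𝒞, IsZero (jStar.obj X) ↔ ∃ A₀ : 𝒜, Nonempty (iIns.obj A₀ ≅ X)

variable {𝒜 : Type u₁} {𝒞 : Type u₂} {ℬ : Type u₃}
  [Category.{v₁} 𝒜] [Category.{v₂} 𝒞] [Category.{v₃} ℬ]
  [Abelian 𝒜] [Abelian 𝒞] [Abelian ℬ]

/-- `0 ⟶ X ⟶ Y ⟶ Z ⟶ 0` is a short exact sequence. -/
def IsSES {𝒟 : Type*} [Category 𝒟] [Abelian 𝒟] {X Y Z : 𝒟}
    (f : X ⟶ Y) (g : Y ⟶ Z) : Prop :=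
  ∃ w : f ≫ g = 0, (ShortComplex.mk f g w).ShortExact

namespace CategoryTheory

namespace Adjunction

variable {C D : Type*} [Category C] [Category D] {F : C ⥤ D} {G : D ⥤ C}

lemma eq_zero_of_isZero_obj_right [HasZeroMorphisms D] (adj : F ⊣ G) {X : C} {Y : D}
    (hY : IsZero (G.obj Y)) (f : F.obj X ⟶ Y) : f = 0 :=
  (adj.homEquiv X Y).injective (hY.eq_of_tgt _ _)

lemma isZero_obj_left_of_unit_app_eq_zero [HasZeroMorphisms C] [HasZeroMorphisms D]
    (adj : F ⊣ G) [F.PreservesZeroMorphisms] {X : C} (h : adj.unit.app X = 0) :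
    IsZero (F.obj X) := by
  rw [IsZero.iff_id_eq_zero, ← adj.left_triangle_components X, h, F.map_zero, zero_comp]

lemma isZero_obj_right_of_counit_app_eq_zero [HasZeroMorphisms C] [HasZeroMorphisms D]
    (adj : F ⊣ G) [G.PreservesZeroMorphisms] {Y : D} (h : adj.counit.app Y = 0) :
    IsZero (G.obj Y) := by
  rw [IsZero.iff_id_eq_zero, ← adj.right_triangle_components Y, h, G.map_zero, comp_zero]

end Adjunction

lemma Functor.preservesFiniteLimits_of_preservesMonomorphisms {C D : Type*} [Category C]
    [Category D] [Abelian C] [Abelian D] (F : C ⥤ D) [F.Additive] [PreservesFiniteColimits F]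
    [F.PreservesMonomorphisms] : PreservesFiniteLimits F := by
  have hright := ((F.preservesFiniteColimits_tfae).out 3 0).mp ‹_›
  refine ((F.preservesFiniteLimits_tfae).out 0 3).mp ?_
  intro S hS
  have := hS.mono_f
  exact ⟨(hright S hS).1, inferInstance⟩

namespace ShortComplex

variable {C : Type*} [Category C] [Abelian C]

lemma exists_mono_kernel_τ₃_to_cokernel_τ₁ {S₁ S₂ : ShortComplex C} (φ : S₁ ⟶ S₂)
    (h₁ : S₁.Exact) (h₂ : S₂.Exact) [Epi S₁.g] [Mono S₂.f] [Mono φ.τ₂] :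
    ∃ δ : kernel φ.τ₃ ⟶ cokernel φ.τ₁, Mono δ := by
  let D : SnakeInput C :=
    { L₀ := kernel φ, L₁ := S₁, L₂ := S₂, L₃ := cokernel φ
      v₀₁ := kernel.ι φ, v₁₂ := φ, v₂₃ := cokernel.π φ
      w₀₂ := kernel.condition φ, w₁₃ := cokernel.condition φ
      h₀ := kernelIsKernel φ, h₃ := cokernelIsCokernel φ
      L₁_exact := h₁, epi_L₁_g := ‹_›, L₂_exact := h₂, mono_L₂_f := ‹_› }
  have := D.mono_δ (KernelFork.IsLimit.isZero_of_mono D.h₀τ₂)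
  exact ⟨(D.h₀τ₃.conePointUniqueUpToIso (limit.isLimit _)).inv ≫ D.δ ≫
    (D.h₃τ₁.coconePointUniqueUpToIso (colimit.isColimit _)).hom, inferInstance⟩

end ShortComplex

end CategoryTheory

namespace Recollement

variable (R : Recollement 𝒜 𝒞 ℬ)

attribute [instance] iStar_additive iIns_additive jShriek_additive jStar_additive
  iShriek_additive iIns_full iIns_faithful jShriek_full jShriek_faithful

instance : R.iStar.IsLeftAdjoint := R.adj₁.isLeftAdjoint
instance : R.jShriek.IsLeftAdjoint := R.adj₃.isLeftAdjoint
instance : R.jStar.IsLeftAdjoint := R.adj₄.isLeftAdjoint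
instance : R.jStar.IsRightAdjoint := R.adj₃.isRightAdjoint

lemma isZero_jStar_obj_iIns (A : 𝒜) : IsZero (R.jStar.obj (R.iIns.obj A)) :=
  (R.im_eq_ker _).mpr ⟨A, ⟨Iso.refl _⟩⟩

lemma hom_jShriek_iIns_eq_zero {B : ℬ} {A : 𝒜} (f : R.jShriek.obj B ⟶ R.iIns.obj A) : f = 0 :=
  R.adj₃.eq_zero_of_isZero_obj_right (R.isZero_jStar_obj_iIns A) f

lemma isZero_iStar_obj_jShriek (B : ℬ) : IsZero (R.iStar.obj (R.jShriek.obj B)) :=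
  R.adj₁.isZero_obj_left_of_unit_app_eq_zero (R.hom_jShriek_iIns_eq_zero _)

lemma isZero_of_isZero_jStar_obj_of_isZero_iStar_obj {X : 𝒞} (hj : IsZero (R.jStar.obj X))
    (hi : IsZero (R.iStar.obj X)) : IsZero X := by
  obtain ⟨A, ⟨e⟩⟩ := (R.im_eq_ker X).mp hj
  have hA : IsZero A := hi.of_iso (R.iStar.mapIso e.symm ≪≫ asIso (R.adj₁.counit.app A)).symm
  exact (R.iIns.map_isZero hA).of_iso e.symm

lemma isZero_jStar_obj_kernel_counit_app (X : 𝒞) :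
    IsZero (R.jStar.obj (kernel (R.adj₃.counit.app X))) := by
  have hι : R.jStar.map (kernel.ι (R.adj₃.counit.app X)) = 0 := by
    rw [← cancel_mono (R.jStar.map (R.adj₃.counit.app X)), ← R.jStar.map_comp,
      kernel.condition, R.jStar.map_zero, zero_comp]
  exact IsZero.of_mono_eq_zero _ hι

lemma isZero_jStar_obj_cokernel_counit_app (X : 𝒞) :
    IsZero (R.jStar.obj (cokernel (R.adj₃.counit.app X))) := by
  have hπ : R.jStar.map (cokernel.π (R.adj₃.counit.app X)) = 0 := by
    rw [← cancel_epi (R.jStar.map (R.adj₃.counit.app X)), ← R.jStar.map_comp,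
      cokernel.condition, R.jStar.map_zero, comp_zero]
  exact IsZero.of_epi_eq_zero _ hπ

lemma forall_isZero_iShriek_obj_jShriek_iff :
    (∀ B, IsZero (R.iShriek.obj (R.jShriek.obj B))) ↔
      ∀ ⦃M : 𝒞⦄ ⦃B : ℬ⦄, IsZero (R.jStar.obj M) → ∀ f : M ⟶ R.jShriek.obj B, f = 0 := by
  refine ⟨fun hb M B hM f => ?_, fun h B => ?_⟩
  · obtain ⟨A, ⟨e⟩⟩ := (R.im_eq_ker M).mp hM
    rw [← cancel_epi e.hom, comp_zero]
    exact R.adj₂.eq_zero_of_isZero_obj_right (hb B) _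
  · exact R.adj₂.isZero_obj_right_of_counit_app_eq_zero (h (R.isZero_jStar_obj_iIns _) _)

lemma hom_eq_zero_of_preservesMonomorphisms [R.iStar.PreservesMonomorphisms] {M : 𝒞} {B : ℬ}
    (hM : IsZero (R.jStar.obj M)) (f : M ⟶ R.jShriek.obj B) : f = 0 := by
  have hI : IsZero (Abelian.image f) := R.isZero_of_isZero_jStar_obj_of_isZero_iStar_obj
    (IsZero.of_epi (R.jStar.map (Abelian.factorThruImage f)) hM)
    (IsZero.of_mono (R.iStar.map (Abelian.image.ι f)) (R.isZero_iStar_obj_jShriek B))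
  rw [← Abelian.image.fac f, hI.eq_of_src (Abelian.image.ι f) 0, comp_zero]

lemma exists_unit_app_comp_eq {X Y : 𝒞} (hY : IsZero (R.jStar.obj Y)) (g : X ⟶ Y) :
    ∃ k : R.iIns.obj (R.iStar.obj X) ⟶ Y, R.adj₁.unit.app X ≫ k = g := by
  obtain ⟨A, ⟨e⟩⟩ := (R.im_eq_ker Y).mp hY
  have h := (R.adj₁.homEquiv X A).apply_symm_apply (g ≫ e.inv)
  rw [Adjunction.homEquiv_unit] at h
  exact ⟨_, by rw [reassoc_of% h, e.inv_hom_id, Category.comp_id]⟩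

lemma eq_zero_of_unit_app_comp_eq_zero {X Y : 𝒞} (hY : IsZero (R.jStar.obj Y))
    {p : R.iIns.obj (R.iStar.obj X) ⟶ Y} (hp : R.adj₁.unit.app X ≫ p = 0) : p = 0 := by
  obtain ⟨A, ⟨e⟩⟩ := (R.im_eq_ker Y).mp hY
  obtain ⟨q, hq⟩ := R.iIns.map_surjective (p ≫ e.inv)
  have hq0 : q = 0 := (R.adj₁.homEquiv X A).injective (by
    simp [Adjunction.homEquiv_unit, hq, reassoc_of% hp])
  rw [← cancel_mono e.inv, ← hq, hq0, R.iIns.map_zero, zero_comp]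

lemma epi_unit_app (X : 𝒞) : Epi (R.adj₁.unit.app X) :=
  Abelian.epi_of_cokernel_π_eq_zero _ <| R.eq_zero_of_unit_app_comp_eq_zero
    (IsZero.of_epi (R.jStar.map (cokernel.π _)) (R.isZero_jStar_obj_iIns _)) (cokernel.condition _)

lemma mono_counit_app
    (h : ∀ ⦃M : 𝒞⦄ ⦃B : ℬ⦄, IsZero (R.jStar.obj M) → ∀ f : M ⟶ R.jShriek.obj B, f = 0)
    (X : 𝒞) : Mono (R.adj₃.counit.app X) :=
  Abelian.mono_of_kernel_ι_eq_zero _ (h (R.isZero_jStar_obj_kernel_counit_app X) _)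

noncomputable def shortComplex (X : 𝒞) : ShortComplex 𝒞 where
  X₁ := R.jShriek.obj (R.jStar.obj X)
  X₂ := X
  X₃ := R.iIns.obj (R.iStar.obj X)
  f := R.adj₃.counit.app X
  g := R.adj₁.unit.app X
  zero := R.hom_jShriek_iIns_eq_zero _

def shortComplexMap {X Y : 𝒞} (f : X ⟶ Y) : R.shortComplex X ⟶ R.shortComplex Y where
  τ₁ := R.jShriek.map (R.jStar.map f)
  τ₂ := f
  τ₃ := R.iIns.map (R.iStar.map f)
  comm₁₂ := R.adj₃.counit.naturality f
  comm₂₃ := (R.adj₁.unit_naturality f).symm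

lemma shortComplex_exact (X : 𝒞) : (R.shortComplex X).Exact := by
  refine ShortComplex.exact_of_g_is_cokernel _ (CokernelCofork.IsColimit.ofπ' _ _
    (hp := R.epi_unit_app X) fun k hk => ?_)
  have hπ := R.exists_unit_app_comp_eq (X := X) (R.isZero_jStar_obj_cokernel_counit_app X)
    (cokernel.π (R.adj₃.counit.app X))
  exact ⟨hπ.choose ≫ cokernel.desc _ k hk,
    ((reassoc_of% hπ.choose_spec) _).trans (cokernel.π_desc _ _ _)⟩

lemma preservesMonomorphisms_iStar
    (h : ∀ ⦃M : 𝒞⦄ ⦃B : ℬ⦄, IsZero (R.jStar.obj M) → ∀ f : M ⟶ R.jShriek.obj B, f = 0) :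
    R.iStar.PreservesMonomorphisms := by
  refine ⟨fun {X Y} f _ => ?_⟩
  have : Epi (R.shortComplex X).g := R.epi_unit_app X
  have : Mono (R.shortComplex Y).f := R.mono_counit_app h Y
  have : Mono (R.shortComplexMap f).τ₂ := ‹Mono f›
  obtain ⟨δ, _⟩ : ∃ δ : kernel (R.iIns.map (R.iStar.map f)) ⟶
      cokernel (R.jShriek.map (R.jStar.map f)), Mono δ :=
    ShortComplex.exists_mono_kernel_τ₃_to_cokernel_τ₁ (R.shortComplexMap f)
      (R.shortComplex_exact X) (R.shortComplex_exact Y)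
  have hK : IsZero (R.jStar.obj (kernel (R.iIns.map (R.iStar.map f)))) :=
    IsZero.of_mono (R.jStar.map (kernel.ι _)) (R.isZero_jStar_obj_iIns _)
  have hδ : δ ≫ (PreservesCokernel.iso R.jShriek (R.jStar.map f)).inv = 0 := h hK _
  exact R.iIns.mono_of_mono_map <| Abelian.mono_of_kernel_ι_eq_zero _
    ((IsZero.of_mono_eq_zero _ hδ).eq_of_src _ _)

end Recollement

/-- The following are equivalent: (a) `i^*` is an exact functor; (b) `i^! j_! = 0`;
(c) `i^! j_! j^* = 0`. -/
theorem stmt_5 (R : Recollement 𝒜 𝒞 ℬ) :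
    List.TFAE
      [Nonempty (PreservesFiniteLimits R.iStar) ∧
          Nonempty (PreservesFiniteColimits R.iStar),
        ∀ Y : ℬ, IsZero (R.iShriek.obj (R.jShriek.obj Y)),
        ∀ X : 𝒞, IsZero (R.iShriek.obj (R.jShriek.obj (R.jStar.obj X)))] := by
  tfae_have 1 → 2
  | ⟨⟨_⟩, _⟩ =>
    R.forall_isZero_iShriek_obj_jShriek_iff.mpr fun _ _ => R.hom_eq_zero_of_preservesMonomorphisms
  tfae_have 2 → 1
  | hb =>
    have := R.preservesMonomorphisms_iStar (R.forall_isZero_iShriek_obj_jShriek_iff.mp hb)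
    ⟨⟨R.iStar.preservesFiniteLimits_of_preservesMonomorphisms⟩, ⟨inferInstance⟩⟩
  tfae_have 2 → 3
  | hb, X => hb _
  tfae_have 3 → 2
  | h, B => (h (R.jShriek.obj B)).of_iso
      (R.iShriek.mapIso (R.jShriek.mapIso (asIso (R.adj₃.unit.app B))))
  tfae_finish
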